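/- arXiv:1311.4261 — 4 statements merged into one kernel-verified Lean document; each statement's English description precedes it below -/
import Mathlib

section
/- For a positive integer n, define a graph on Z/nZ where distinct x, y are adjacent if 2x = y (mod n) or 2y = x (mod n). This graph is connected if and only if n is a power of 2. -/
/-!
Every vertex `x` is joined to `2 ^ k * x` by a path of doublings. So if `2 ^ k = 0` the graph is
connected through `0`. Conversely, if `2` is not nilpotent in a commutative ring, some prime ideal
`𝔭` misses `2`; then `2 * x ∈ 𝔭 ↔ x ∈ 𝔭`, so membership in `𝔭` is constant along edges and `0 ∈ 𝔭`
is never joined to `1 ∉ 𝔭`. In `ZMod n`, `2 ^ k = 0` means `n ∣ 2 ^ k`.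
-/

namespace SimpleGraph

variable {V β : Type*}

theorem fromRel_reachable_iterate (f : V → V) (x : V) (k : ℕ) :
    (fromRel fun x y => y = f x).Reachable x (f^[k] x) := by
  induction k with
  | zero => rfl
  | succ k ih =>
    rw [Function.iterate_succ_apply']
    refine ih.trans ?_
    by_cases hfix : f^[k] x = f (f^[k] x)
    · rw [← hfix]
    · exact ((fromRel_adj _ _ _).mpr ⟨hfix, .inl rfl⟩).reachable

theorem fromRel_apply_eq_of_reachable (f : V → V) (g : V → β) (hg : ∀ x, g (f x) = g x)
    {x y : V} (h : (fromRel fun x y => y = f x).Reachable x y) : g x = g y := by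
  rw [reachable_iff_reflTransGen] at h
  induction h with
  | refl => rfl
  | tail _ hadj ih =>
    obtain ⟨-, rfl | rfl⟩ := (fromRel_adj _ _ _).mp hadj
    exacts [ih.trans (hg _).symm, ih.trans (hg _)]

end SimpleGraph

open SimpleGraph in
theorem fromRel_two_mul_connected_iff {R : Type*} [CommRing R] :
    (fromRel fun x y : R => y = 2 * x).Connected ↔ IsNilpotent (2 : R) := by
  constructor
  · intro hconn
    refine nilpotent_iff_mem_prime.mpr fun 𝔭 h𝔭 => by_contra fun h2 => h𝔭.ne_top ?_
    have hdouble (x : R) : (2 * x ∈ 𝔭) = (x ∈ 𝔭) :=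
      propext <| h𝔭.mul_mem_iff_mem_or_mem.trans (or_iff_right h2)
    have h01 := fromRel_apply_eq_of_reachable _ (· ∈ 𝔭) hdouble (hconn.preconnected 0 1)
    exact (Ideal.eq_top_iff_one 𝔭).mpr (h01 ▸ 𝔭.zero_mem)
  · rintro ⟨k, hk⟩
    refine (connected_iff_exists_forall_reachable _).mpr ⟨0, fun x => ?_⟩
    have hx := fromRel_reachable_iterate (2 * ·) x k
    rw [mul_left_iterate_apply, hk, zero_mul] at hx
    exact hx.symm

theorem ZMod.isNilpotent_two_iff (n : ℕ) : IsNilpotent (2 : ZMod n) ↔ ∃ k : ℕ, n = 2 ^ k := by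
  constructor
  · rintro ⟨k, hk⟩
    have hdvd : n ∣ 2 ^ k := (ZMod.natCast_eq_zero_iff _ _).mp (by exact_mod_cast hk)
    obtain ⟨j, -, rfl⟩ := (Nat.dvd_prime_pow Nat.prime_two).mp hdvd
    exact ⟨j, rfl⟩
  · rintro ⟨k, rfl⟩
    exact ⟨k, by exact_mod_cast ZMod.natCast_self (2 ^ k)⟩

theorem stmt_0_general (n : ℕ) :
    (SimpleGraph.fromRel (fun x y : ZMod n => y = 2 * x)).Connected ↔ ∃ k : ℕ, n = 2 ^ k := by
  rw [fromRel_two_mul_connected_iff, ZMod.isNilpotent_two_iff]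

theorem stmt_0 (n : ℕ) (hn : 0 < n) :
    (SimpleGraph.fromRel (fun x y : ZMod n => y = 2 * x)).Connected ↔ ∃ k : ℕ, n = 2 ^ k :=
  stmt_0_general n
end

section
/- For n = 3^k or n = 2·3^k with k ≥ 0, the graph on Z/nZ generated by T(x) = 3x + 1 (edges {x, T(x)} for x ≠ T(x)) is connected. -/
/-!
The `k`-th iterate of `T x = 3 x + 1` is `x ↦ 3 ^ k x + T^[k] 0`, and `2 · 3 ^ k = 0` in `ZMod n`,
so `3 ^ k x` only depends on the parity of `x`. Hence `T^[k]` takes only the values `T^[k] 0` and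
`T^[k] 1 = T^[k + 1] 0`, both on the forward orbit of `0`; since every `x` is joined to `T^[k] x`,
every vertex lies in the component of `0`.
-/

namespace SimpleGraph

theorem reachable_iterate_fromRel {V : Type*} (f : V → V) (x : V) (m : ℕ) :
    (fromRel fun x y => y = f x).Reachable x (f^[m] x) := by
  induction m with
  | zero => rfl
  | succ m ih =>
    rw [Function.iterate_succ_apply']
    refine ih.trans ?_
    by_cases hfix : f^[m] x = f (f^[m] x)
    · rw [← hfix]
    · exact Adj.reachable ((fromRel_adj _ _ _).2 ⟨hfix, Or.inl rfl⟩)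

end SimpleGraph

theorem iterate_affine {R : Type*} [CommSemiring R] (a b x : R) (m : ℕ) :
    (fun y => a * y + b)^[m] x = a ^ m * x + (fun y => a * y + b)^[m] 0 := by
  induction m with
  | zero => simp
  | succ m ih =>
    rw [Function.iterate_succ_apply', Function.iterate_succ_apply' _ m 0, ih]
    ring

theorem mul_intCast_eq_zero_or_eq_self {R : Type*} [CommRing R] {a : R} (ha : 2 * a = 0)
    (m : ℤ) : a * m = 0 ∨ a * m = a := by
  rcases Int.even_or_odd' m with ⟨q, rfl | rfl⟩
  · left
    push_cast
    linear_combination (q : R) * ha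
  · right
    push_cast
    linear_combination (q : R) * ha

theorem stmt_5 (n k : ℕ) (h : n = 3 ^ k ∨ n = 2 * 3 ^ k) :
    (SimpleGraph.fromRel (fun x y : ZMod n => y = 3 * x + 1)).Connected := by
  set T : ZMod n → ZMod n := fun x => 3 * x + 1
  have htwo : 2 * (3 : ZMod n) ^ k = 0 := by
    have hdvd : n ∣ 2 * 3 ^ k := by
      rcases h with rfl | rfl
      · exact dvd_mul_left _ _
      · exact dvd_rfl
    exact_mod_cast (ZMod.natCast_eq_zero_iff _ _).2 hdvd
  have hvalues : ∀ x, T^[k] x = T^[k] 0 ∨ T^[k] x = T^[k + 1] 0 := by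
    intro x
    obtain ⟨m, rfl⟩ := ZMod.intCast_surjective x
    rw [Function.iterate_succ_apply, iterate_affine, iterate_affine _ _ (T 0)]
    rcases mul_intCast_eq_zero_or_eq_self htwo m with hm | hm
    · left; simp [T, hm]
    · right; simp [T, hm]
  refine (SimpleGraph.connected_iff_exists_forall_reachable _).2 ⟨0, fun x => ?_⟩
  have hx := (SimpleGraph.reachable_iterate_fromRel T x k).symm
  rcases hvalues x with hk | hk <;> rw [hk] at hx
  · exact (SimpleGraph.reachable_iterate_fromRel T 0 k).trans hx
  · exact (SimpleGraph.reachable_iterate_fromRel T 0 (k + 1)).trans hx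
end

section
/- Let p be an odd prime such that p - 1 is not a power of 2. Then the graph on (Z/pZ)^* with edges {x, x^2} is disconnected. -/
/-!
Squaring divides the order of an element by `1` or `2`, so for an odd prime `q` the property
"`q` divides the order" is constant on connected components of the squaring graph. When `q ∣ p - 1`,
Cauchy's theorem gives a unit of order `q`, which therefore lies in a different component from `1`.
-/

theorem prime_dvd_orderOf_pow_iff {G : Type*} [Monoid G] {q n : ℕ} (hq : q.Prime) (hqn : ¬ q ∣ n)
    (x : G) : q ∣ orderOf (x ^ n) ↔ q ∣ orderOf x := by
  have hn : n ≠ 0 := by rintro rfl; exact hqn (dvd_zero q)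
  have hcop : q.Coprime ((orderOf x).gcd n) :=
    (Nat.Prime.coprime_iff_not_dvd hq).2 fun h => hqn (h.trans (Nat.gcd_dvd_right _ _))
  conv_rhs => rw [← Nat.div_mul_cancel (Nat.gcd_dvd_left (orderOf x) n)]
  rw [orderOf_pow' x hn, hcop.dvd_mul_right]

theorem SimpleGraph.Reachable.iff_of_forall_adj {V : Type*} {G : SimpleGraph V} {P : V → Prop}
    (hP : ∀ ⦃x y⦄, G.Adj x y → (P x ↔ P y)) {u v : V} (huv : G.Reachable u v) : P u ↔ P v := by
  obtain ⟨w⟩ := huv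
  induction w with
  | nil => rfl
  | cons hadj _ ih => exact (hP hadj).trans ih

theorem SimpleGraph.not_connected_fromRel_pow {G : Type*} [Group G] [Finite G] {q n : ℕ}
    (hq : q.Prime) (hqn : ¬ q ∣ n) (hqG : q ∣ Nat.card G) :
    ¬ (SimpleGraph.fromRel (fun x y : G => y = x ^ n)).Connected := by
  intro hconn
  have := Fact.mk hq
  obtain ⟨x, hx⟩ := exists_prime_orderOf_dvd_card' q hqG
  have hinv : ∀ ⦃a b : G⦄, (SimpleGraph.fromRel fun x y : G => y = x ^ n).Adj a b →
      (q ∣ orderOf a ↔ q ∣ orderOf b) := by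
    rintro a b ⟨-, rfl | rfl⟩
    · exact (prime_dvd_orderOf_pow_iff hq hqn a).symm
    · exact prime_dvd_orderOf_pow_iff hq hqn b
  have hq1 : q ∣ orderOf (1 : G) :=
    ((hconn.preconnected x 1).iff_of_forall_adj hinv).1 (hx ▸ dvd_rfl)
  rw [orderOf_one, Nat.dvd_one] at hq1
  exact hq.ne_one hq1

theorem stmt_9_general (p : ℕ) (hp : p.Prime)
    (h : ¬ ∃ k : ℕ, p - 1 = 2 ^ k) :
    ¬ (SimpleGraph.fromRel (fun x y : (ZMod p)ˣ => y = x ^ 2)).Connected := by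
  have := Fact.mk hp
  obtain ⟨q, hq, hqp, hqodd⟩ := (p - 1).eq_two_pow_or_exists_odd_prime_and_dvd.resolve_left h
  refine SimpleGraph.not_connected_fromRel_pow hq ?_ ?_
  · intro hq2
    rw [(Nat.prime_dvd_prime_iff_eq hq Nat.prime_two).1 hq2] at hqodd
    exact Nat.not_odd_iff_even.2 even_two hqodd
  · rwa [Nat.card_eq_fintype_card, ZMod.card_units]

theorem stmt_9 (p : ℕ) (hp : p.Prime) (hodd : Odd p)
    (h : ¬ ∃ k : ℕ, p - 1 = 2 ^ k) :
    ¬ (SimpleGraph.fromRel (fun x y : (ZMod p)ˣ => y = x ^ 2)).Connected :=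
  stmt_9_general p hp h
end

section
/- Let p be an odd prime such that p - 1 has a prime factor q with q ≠ 2 and q ≠ 3. Then the graph on (Z/pZ)^* generated by x ↦ x^2 and x ↦ x^3 is disconnected. -/
/-! With `m = (p - 1) / q`, the elements `x` with `x ^ m = 1` (the `q`-th powers in the cyclic
group `(ZMod p)ˣ`) form a proper subset. Squaring and cubing preserve it in both directions:
if `(x ^ k) ^ m = 1` then the order of `x ^ m` divides both `q` and `k`, hence is `1` when `q`
is coprime to `k`. So no edge leaves this subset, and the graph is disconnected. -/

namespace SimpleGraph

variable {V : Type*} {G : SimpleGraph V} {P : V → Prop}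

theorem Reachable.iff_of_forall_adj_s15 (hP : ∀ x y, G.Adj x y → (P x ↔ P y)) {x y : V}
    (h : G.Reachable x y) : P x ↔ P y := by
  obtain ⟨w⟩ := h
  induction w with
  | nil => rfl
  | cons hadj _ ih => exact (hP _ _ hadj).trans ih

theorem not_connected_of_forall_adj_iff (hP : ∀ x y, G.Adj x y → (P x ↔ P y)) {a b : V}
    (ha : P a) (hb : ¬P b) : ¬G.Connected :=
  fun hG => hb (((hG.preconnected a b).iff_of_forall_adj_s15 hP).1 ha)

end SimpleGraph

section CardDivPow

variable {G : Type*} [Group G] {q : ℕ}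

theorem pow_pow_card_div_eq_one_iff (hqG : q ∣ Nat.card G) {k : ℕ} (hk : q.Coprime k) (x : G) :
    (x ^ k) ^ (Nat.card G / q) = 1 ↔ x ^ (Nat.card G / q) = 1 := by
  rw [pow_right_comm]
  refine ⟨fun h => (pow_eq_one_iff_of_coprime hk).1 ⟨?_, h⟩, fun h => by rw [h, one_pow]⟩
  rw [← pow_mul, Nat.div_mul_cancel hqG, pow_card_eq_one']

theorem exists_pow_card_div_ne_one [Finite G] [IsCyclic G] (hq : 1 < q) (hqG : q ∣ Nat.card G) :
    ∃ x : G, x ^ (Nat.card G / q) ≠ 1 := by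
  by_contra! h
  have hcard : 0 < Nat.card G := Nat.card_pos
  have hdvd : Monoid.exponent G ∣ Nat.card G / q := Monoid.exponent_dvd_of_forall_pow_eq_one h
  rw [IsCyclic.exponent_eq_card] at hdvd
  have hpos : 0 < Nat.card G / q := Nat.div_pos (Nat.le_of_dvd hcard hqG) (by omega)
  exact (Nat.le_of_dvd hpos hdvd).not_gt (Nat.div_lt_self hcard hq)

end CardDivPow

theorem stmt_15_general (p q : ℕ) (hp : p.Prime) (hq : q.Prime)
    (hqd : q ∣ (p - 1)) (hq2 : q ≠ 2) (hq3 : q ≠ 3) :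
    ¬ (SimpleGraph.fromRel (fun x y : (ZMod p)ˣ => y = x ^ 2 ∨ y = x ^ 3)).Connected := by
  have := Fact.mk hp
  have hcard : Nat.card (ZMod p)ˣ = p - 1 := by rw [Nat.card_eq_fintype_card, ZMod.card_units]
  rw [← hcard] at hqd
  have h2 : q.Coprime 2 := (Nat.coprime_primes hq Nat.prime_two).2 hq2
  have h3 : q.Coprime 3 := (Nat.coprime_primes hq Nat.prime_three).2 hq3
  obtain ⟨b, hb⟩ := exists_pow_card_div_ne_one hq.one_lt hqd
  refine SimpleGraph.not_connected_of_forall_adj_iff (P := fun x => x ^ (Nat.card _ / q) = 1)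
    ?_ (one_pow _) hb
  intro x y hxy
  rcases ((SimpleGraph.fromRel_adj _ x y).1 hxy).2 with (rfl | rfl) | (rfl | rfl)
  · exact (pow_pow_card_div_eq_one_iff hqd h2 x).symm
  · exact (pow_pow_card_div_eq_one_iff hqd h3 x).symm
  · exact pow_pow_card_div_eq_one_iff hqd h2 y
  · exact pow_pow_card_div_eq_one_iff hqd h3 y

theorem stmt_15 (p q : ℕ) (hp : p.Prime) (hodd : Odd p) (hq : q.Prime)
    (hqd : q ∣ (p - 1)) (hq2 : q ≠ 2) (hq3 : q ≠ 3) :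
    ¬ (SimpleGraph.fromRel (fun x y : (ZMod p)ˣ => y = x ^ 2 ∨ y = x ^ 3)).Connected :=
  stmt_15_general p q hp hq hqd hq2 hq3
end
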